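/- Assume (|v|²/2 + V(|v|))/|v| → +∞ as |v| → ∞, let Ω ∈ S^{d-1}, u = lΩ with l ≥ 0, and M_u(v) = Z(σ,l)^{-1} exp(−Φ_u(v)/σ). Then σ ∂_l Z(σ,l) = Z(σ,l) ∫_{ℝ^d} M_u(v)(v·Ω − l) dv. Consequently, ∫ M_u(v)(v − u) dv = 0 if and only if l is a critical point of Z(σ,·). -/

import Mathlib

/-! Differentiating under the integral sign, with the domination supplied by the superlinear
growth of `Φ_u`, gives `σ ∂_l Z = ∫ e^{-Φ_u/σ} (v·Ω − l)`. The mean `∫ M_u (v − u)` has no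
component orthogonal to `Ω`: `M_u` is invariant under the reflection in the line `ℝΩ`, which
fixes `u` and negates the orthogonal component of `v`. So the mean vanishes exactly when its
`Ω`-component, a positive multiple of `∂_l Z`, does. -/

open MeasureTheory Real Filter Set
open scoped RealInnerProductSpace

section Superlinear

variable {E : Type*} [NormedAddCommGroup E] [NormedSpace ℝ E] [FiniteDimensional ℝ E]
  [MeasurableSpace E] [BorelSpace E] [Nontrivial E] (μ : Measure E) [μ.IsAddHaarMeasure]
  {g : ℝ → ℝ}

theorem integrable_norm_pow_mul_exp_neg_of_superlinear (hg : Continuous g)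
    (hg_top : Tendsto (fun r => g r / r) atTop atTop) (n : ℕ) :
    Integrable (fun v : E => ‖v‖ ^ n * exp (-g ‖v‖)) μ := by
  rw [integrable_fun_norm_addHaar μ (f := fun r => r ^ n * exp (-g r))]
  refine integrable_of_isBigO_exp_neg one_pos (by fun_prop) (Asymptotics.IsBigO.of_bound 1 ?_)
  have hpoly := (tendsto_pow_mul_exp_neg_atTop_nhds_zero (Module.finrank ℝ E - 1 + n)).eventually
    (ge_mem_nhds one_pos)
  filter_upwards [hg_top.eventually_ge_atTop 2, eventually_gt_atTop 0, hpoly]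
    with r hgr_div hr hpow
  have hgr : 2 * r ≤ g r := (le_div_iff₀ hr).mp hgr_div
  rw [smul_eq_mul, norm_mul, norm_mul, norm_pow, norm_pow, Real.norm_of_nonneg hr.le,
    Real.norm_of_nonneg (exp_pos _).le, Real.norm_of_nonneg (exp_pos _).le, ← mul_assoc, ← pow_add]
  calc r ^ (Module.finrank ℝ E - 1 + n) * exp (-g r)
      ≤ r ^ (Module.finrank ℝ E - 1 + n) * exp (-r) * exp (-1 * r) := by
        rw [mul_assoc, ← exp_add]; gcongr; linarith
    _ ≤ 1 * exp (-1 * r) := by gcongr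

theorem integrable_norm_add_mul_exp_neg_of_superlinear (hg : Continuous g)
    (hg_top : Tendsto (fun r => g r / r) atTop atTop) (c : ℝ) :
    Integrable (fun v : E => (‖v‖ + c) * exp (-g ‖v‖)) μ := by
  have h₀ := integrable_norm_pow_mul_exp_neg_of_superlinear μ hg hg_top 0
  have h₁ := integrable_norm_pow_mul_exp_neg_of_superlinear μ hg hg_top 1
  refine (h₁.add (h₀.const_mul c)).congr (.of_forall fun v => ?_)
  simp only [Pi.add_apply, pow_zero, pow_one]
  ring

end Superlinear

section Gibbs

variable {E : Type*} [NormedAddCommGroup E] {V : ℝ → ℝ} {σ : ℝ}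

/-- `exp (-Φ_u(v)/σ)`, so that `Z(σ,l) = ∫ v, gibbsWeight V σ (l • Ω) v`. -/
noncomputable def gibbsWeight (V : ℝ → ℝ) (σ : ℝ) (u v : E) : ℝ :=
  exp (-((‖v - u‖ ^ 2 / 2 + V ‖v‖) / σ))

theorem gibbsWeight_pos (u v : E) : 0 < gibbsWeight V σ u v := exp_pos _

theorem continuous_gibbsWeight (hV : Continuous V) (u : E) : Continuous (gibbsWeight V σ u) := by
  unfold gibbsWeight; fun_prop

variable [InnerProductSpace ℝ E]

theorem norm_sq_sub_two_mul_le_norm_sub_sq {u : E} {L : ℝ} (hu : ‖u‖ ≤ L) (v : E) :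
    ‖v‖ ^ 2 - 2 * L * ‖v‖ ≤ ‖v - u‖ ^ 2 := by
  rw [norm_sub_sq_real]
  nlinarith [real_inner_le_norm v u, norm_nonneg v, sq_nonneg ‖u‖]

theorem gibbsWeight_le (hσ : 0 ≤ σ) {u : E} {L : ℝ} (hu : ‖u‖ ≤ L) (v : E) :
    gibbsWeight V σ u v ≤ exp (-((‖v‖ ^ 2 / 2 + V ‖v‖ - L * ‖v‖) / σ)) := by
  unfold gibbsWeight
  gcongr
  linarith [norm_sq_sub_two_mul_le_norm_sub_sq hu v]

theorem tendsto_potential_sub_linear_div_atTop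
    (hV : Tendsto (fun r : ℝ => (r ^ 2 / 2 + V r) / r) atTop atTop) (hσ : 0 < σ) (L : ℝ) :
    Tendsto (fun r => (r ^ 2 / 2 + V r - L * r) / σ / r) atTop atTop := by
  refine ((tendsto_atTop_add_const_right _ (-L) hV).atTop_div_const hσ).congr' ?_
  filter_upwards [eventually_ne_atTop 0] with r hr
  field_simp
  ring

theorem hasDerivAt_gibbsWeight_smul {Ω : E} (hΩ : ‖Ω‖ = 1) (v : E) (x : ℝ) :
    HasDerivAt (fun y => gibbsWeight V σ (y • Ω) v)
      (gibbsWeight V σ (x • Ω) v * ((⟪v, Ω⟫ - x) / σ)) x := by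
  have hline : HasDerivAt (fun y : ℝ => v - y • Ω) (-Ω) x := by
    simpa using ((hasDerivAt_id x).smul_const Ω).const_sub v
  have hexponent : HasDerivAt (fun y => -((‖v - y • Ω‖ ^ 2 / 2 + V ‖v‖) / σ))
      ((⟪v, Ω⟫ - x) / σ) x := by
    refine (((hline.norm_sq.div_const 2).add_const (V ‖v‖)).div_const σ).neg.congr_deriv ?_
    rw [inner_neg_right, inner_sub_left, real_inner_smul_left, real_inner_self_eq_norm_sq, hΩ]
    ring
  exact hexponent.exp

theorem gibbsWeight_reflection (K : Submodule ℝ E) [K.HasOrthogonalProjection] {u : E}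
    (hu : u ∈ K) (v : E) : gibbsWeight V σ u (K.reflection v) = gibbsWeight V σ u v := by
  have hsub : K.reflection v - u = K.reflection (v - u) := by
    rw [map_sub, K.reflection_mem_subspace_eq_self hu]
  simp only [gibbsWeight, hsub, LinearIsometryEquiv.norm_map]

variable [FiniteDimensional ℝ E] [MeasurableSpace E] [BorelSpace E] [Nontrivial E]
  (μ : Measure E) [μ.IsAddHaarMeasure]

theorem integrable_gibbsWeight (hV : Continuous V)
    (hV_top : Tendsto (fun r : ℝ => (r ^ 2 / 2 + V r) / r) atTop atTop) (hσ : 0 < σ) (u : E) :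
    Integrable (gibbsWeight V σ u) μ := by
  have := integrable_norm_pow_mul_exp_neg_of_superlinear μ (by fun_prop)
    (tendsto_potential_sub_linear_div_atTop hV_top hσ ‖u‖) 0
  refine this.mono' (continuous_gibbsWeight hV u).aestronglyMeasurable (.of_forall fun v => ?_)
  rw [Real.norm_of_nonneg (gibbsWeight_pos u v).le, pow_zero, one_mul]
  exact gibbsWeight_le hσ.le le_rfl v

theorem integral_gibbsWeight_pos (hV : Continuous V)
    (hV_top : Tendsto (fun r : ℝ => (r ^ 2 / 2 + V r) / r) atTop atTop) (hσ : 0 < σ) (u : E) :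
    0 < ∫ v, gibbsWeight V σ u v ∂μ :=
  integral_exp_pos (integrable_gibbsWeight μ hV hV_top hσ u)

theorem integrable_gibbsWeight_smul_sub (hV : Continuous V)
    (hV_top : Tendsto (fun r : ℝ => (r ^ 2 / 2 + V r) / r) atTop atTop) (hσ : 0 < σ) (u w : E) :
    Integrable (fun v => gibbsWeight V σ u v • (v - w)) μ := by
  have := integrable_norm_add_mul_exp_neg_of_superlinear μ (by fun_prop)
    (tendsto_potential_sub_linear_div_atTop hV_top hσ ‖u‖) ‖w‖
  refine this.mono'
    ((continuous_gibbsWeight hV u).smul (continuous_id.sub continuous_const)).aestronglyMeasurable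
    (.of_forall fun v => ?_)
  rw [norm_smul, Real.norm_of_nonneg (gibbsWeight_pos u v).le, mul_comm]
  exact mul_le_mul (norm_sub_le v w) (gibbsWeight_le hσ.le le_rfl v) (gibbsWeight_pos u v).le
    (by positivity)

theorem hasDerivAt_integral_gibbsWeight_smul (hV : Continuous V)
    (hV_top : Tendsto (fun r : ℝ => (r ^ 2 / 2 + V r) / r) atTop atTop) (hσ : 0 < σ)
    {Ω : E} (hΩ : ‖Ω‖ = 1) (l : ℝ) :
    HasDerivAt (fun x => ∫ v, gibbsWeight V σ (x • Ω) v ∂μ)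
      (∫ v, gibbsWeight V σ (l • Ω) v * ((⟪v, Ω⟫ - l) / σ) ∂μ) l := by
  set L := |l| + 1
  have hball : ∀ x ∈ Metric.ball l 1, ‖x • Ω‖ ≤ L := by
    intro x hx
    rw [Metric.mem_ball, Real.dist_eq] at hx
    rw [norm_smul, hΩ, mul_one, Real.norm_eq_abs]
    linarith [abs_sub_abs_le_abs_sub x l]
  have hbound : ∀ v, ∀ x ∈ Metric.ball l 1, ‖gibbsWeight V σ (x • Ω) v * ((⟪v, Ω⟫ - x) / σ)‖ ≤
      σ⁻¹ * ((‖v‖ + L) * exp (-((‖v‖ ^ 2 / 2 + V ‖v‖ - L * ‖v‖) / σ))) := by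
    intro v x hx
    have hinner : |⟪v, Ω⟫ - x| ≤ ‖v‖ + L := by
      have hx' := hball x hx
      rw [norm_smul, hΩ, mul_one, Real.norm_eq_abs] at hx'
      have := abs_real_inner_le_norm v Ω
      rw [hΩ, mul_one] at this
      linarith [abs_sub (⟪v, Ω⟫) x]
    rw [norm_mul, norm_div, Real.norm_of_nonneg (gibbsWeight_pos _ v).le, Real.norm_eq_abs,
      Real.norm_of_nonneg hσ.le, div_eq_inv_mul, mul_left_comm, mul_comm (_ + _)]
    gcongr
    exact gibbsWeight_le hσ.le (hball x hx) v
  exact (hasDerivAt_integral_of_dominated_loc_of_deriv_le (Metric.ball_mem_nhds l one_pos)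
    (.of_forall fun x => (continuous_gibbsWeight hV _).aestronglyMeasurable)
    (integrable_gibbsWeight μ hV hV_top hσ _)
    ((continuous_gibbsWeight hV _).mul (by fun_prop)).aestronglyMeasurable
    (.of_forall hbound)
    ((integrable_norm_add_mul_exp_neg_of_superlinear μ (by fun_prop)
      (tendsto_potential_sub_linear_div_atTop hV_top hσ L) L).const_mul σ⁻¹)
    (.of_forall fun v x _ => hasDerivAt_gibbsWeight_smul hΩ v x)).2

end Gibbs

section Reflection

variable {E : Type*} [NormedAddCommGroup E] [InnerProductSpace ℝ E] [FiniteDimensional ℝ E]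
  [MeasurableSpace E] [BorelSpace E]

theorem integral_smul_starProjection_orthogonal_eq_zero (K : Submodule ℝ E) {f : E → ℝ}
    (hf : ∀ v, f (K.reflection v) = f v) :
    ∫ v, f v • Kᗮ.starProjection v = 0 := by
  have hodd : ∀ v, Kᗮ.starProjection (K.reflection v) = -Kᗮ.starProjection v := by
    intro v
    rw [Submodule.reflection_apply, map_sub, map_nsmul,
      Submodule.starProjection_orthogonal_apply_eq_zero (K.starProjection_apply_mem v), smul_zero,
      zero_sub]
  have hcomp := K.reflection.measurePreserving.integral_comp
    K.reflection.toHomeomorph.measurableEmbedding (fun v => f v • Kᗮ.starProjection v)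
  simp only [hf, hodd, smul_neg, integral_neg] at hcomp
  have := IsAddTorsionFree.of_isTorsionFree ℝ E
  exact self_eq_neg.mp hcomp.symm

theorem integral_smul_sub_smul_eq_of_reflection_invariant {f : E → ℝ} {Ω : E} (hΩ : ‖Ω‖ = 1)
    (l : ℝ) (hf : ∀ v, f ((ℝ ∙ Ω).reflection v) = f v)
    (hint : Integrable (fun v => f v • (v - l • Ω))) :
    ∫ v, f v • (v - l • Ω) = (∫ v, f v * (⟪v, Ω⟫ - l)) • Ω := by
  have horth : (ℝ ∙ Ω)ᗮ.starProjection (∫ v, f v • (v - l • Ω)) = 0 := by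
    rw [← ContinuousLinearMap.integral_comp_comm _ hint]
    simp only [map_smul, map_sub, Submodule.starProjection_orthogonal_apply_eq_zero
      (Submodule.smul_mem _ l (Submodule.mem_span_singleton_self Ω)), sub_zero]
    exact integral_smul_starProjection_orthogonal_eq_zero _ hf
  rw [← Submodule.starProjection_add_starProjection_orthogonal (K := ℝ ∙ Ω)
    (∫ v, f v • (v - l • Ω)), horth, add_zero, Submodule.starProjection_unit_singleton ℝ hΩ,
    ← integral_inner hint]
  congr 2
  funext v
  rw [real_inner_smul_right, inner_sub_right, real_inner_smul_right, real_inner_self_eq_norm_sq,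
    hΩ, real_inner_comm]
  ring

end Reflection

theorem stmt5_general {d : ℕ} (V : ℝ → ℝ) (hV : Continuous V)
    (hcoerc : Tendsto (fun r : ℝ => (r ^ 2 / 2 + V r) / r) atTop atTop)
    (σ : ℝ) (hσ : 0 < σ) (Ω : EuclideanSpace ℝ (Fin d)) (hΩ : ‖Ω‖ = 1)
    (l : ℝ)
    (Z : ℝ → ℝ)
    (hZ : ∀ l' : ℝ, Z l' = ∫ v : EuclideanSpace ℝ (Fin d),
      Real.exp (-((‖v - l' • Ω‖ ^ 2 / 2 + V ‖v‖) / σ)))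
    (M : EuclideanSpace ℝ (Fin d) → ℝ)
    (hM : M = fun v => (Z l)⁻¹ * Real.exp (-((‖v - l • Ω‖ ^ 2 / 2 + V ‖v‖) / σ))) :
    σ * deriv Z l = Z l * ∫ v, M v * (⟪v, Ω⟫ - l) ∧
      ((∫ v, M v • (v - l • Ω)) = 0 ↔ deriv Z l = 0) := by
  have hΩ₀ : Ω ≠ 0 := norm_ne_zero_iff.mp (by simp [hΩ])
  have : Nontrivial (EuclideanSpace ℝ (Fin d)) := nontrivial_of_ne Ω 0 hΩ₀
  have hZ_eq : Z = fun x => ∫ v, gibbsWeight V σ (x • Ω) v := funext hZ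
  have hM_eq : M = fun v => (Z l)⁻¹ * gibbsWeight V σ (l • Ω) v := hM
  have hZ_pos : 0 < Z l := hZ_eq ▸ integral_gibbsWeight_pos volume hV hcoerc hσ _
  have hZ_deriv := hZ_eq ▸ hasDerivAt_integral_gibbsWeight_smul volume hV hcoerc hσ hΩ l
  have hflux : σ * deriv Z l = Z l * ∫ v, M v * (⟪v, Ω⟫ - l) := by
    rw [hZ_deriv.deriv, hM_eq, ← integral_const_mul, ← integral_const_mul]
    congr 1
    funext v
    field_simp
  have hmean : ∫ v, M v • (v - l • Ω) = (∫ v, M v * (⟪v, Ω⟫ - l)) • Ω := by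
    refine integral_smul_sub_smul_eq_of_reflection_invariant hΩ l (fun v => ?_) ?_
    · simp only [hM_eq, gibbsWeight_reflection _
        (Submodule.smul_mem _ l (Submodule.mem_span_singleton_self Ω))]
    · simpa only [hM_eq, mul_smul, Pi.smul_def] using
        (integrable_gibbsWeight_smul_sub volume hV hcoerc hσ (l • Ω) (l • Ω)).smul (Z l)⁻¹
  refine ⟨hflux, ?_⟩
  rw [hmean, smul_eq_zero, or_iff_left hΩ₀]
  constructor <;> intro h <;> rw [h, mul_zero] at hflux
  · exact (mul_eq_zero.mp hflux).resolve_left hσ.ne'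
  · exact (mul_eq_zero.mp hflux.symm).resolve_left hZ_pos.ne'

/-- For `u = lΩ`, `σ ∂_l Z(σ,l) = Z(σ,l) ∫ M_u(v)(v·Ω − l) dv`; consequently
`M_u` is an equilibrium, i.e. `∫ M_u(v)(v − u) dv = 0`, iff `l` is a critical
point of `Z(σ,·)`. -/
theorem stmt5 {d : ℕ} (hd : 2 ≤ d) (V : ℝ → ℝ) (hV : Continuous V)
    (hcoerc : Tendsto (fun r : ℝ => (r ^ 2 / 2 + V r) / r) atTop atTop)
    (σ : ℝ) (hσ : 0 < σ) (Ω : EuclideanSpace ℝ (Fin d)) (hΩ : ‖Ω‖ = 1)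
    (l : ℝ) (hl : 0 ≤ l)
    (Z : ℝ → ℝ)
    (hZ : ∀ l' : ℝ, Z l' = ∫ v : EuclideanSpace ℝ (Fin d),
      Real.exp (-((‖v - l' • Ω‖ ^ 2 / 2 + V ‖v‖) / σ)))
    (M : EuclideanSpace ℝ (Fin d) → ℝ)
    (hM : M = fun v => (Z l)⁻¹ * Real.exp (-((‖v - l • Ω‖ ^ 2 / 2 + V ‖v‖) / σ))) :
    σ * deriv Z l = Z l * ∫ v, M v * (⟪v, Ω⟫ - l) ∧
      ((∫ v, M v • (v - l • Ω)) = 0 ↔ deriv Z l = 0) :=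
  stmt5_general V hV hcoerc σ hσ Ω hΩ l Z hZ M hM
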